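/- arXiv:2410.13238 — 2 statements merged into one kernel-verified Lean document; each statement's English description precedes it below -/
import Mathlib

section
/- Let n = 4 and Ω = B_R ⊂ ℝ⁴ for some R > 0. Then for every radially symmetric function u ∈ C²(Ω̄) satisfying the Neumann boundary condition ∂_ν u = 0 on ∂Ω (i.e., ∇u(x)·x = 0 for |x| = R), one has ∫_Ω |∇u(x)|²/|x|² dx ≤ (1/4) ∫_Ω |Δu|² dx. -/
open MeasureTheory Metric Set Filter

noncomputable section

/-- Pointwise Laplacian: the sum of the pure second derivatives along the
standard orthonormal basis of `EuclideanSpace ℝ (Fin n)`. -/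
def ptLap (n : ℕ) (f : EuclideanSpace ℝ (Fin n) → ℝ) (x : EuclideanSpace ℝ (Fin n)) : ℝ :=
  ∑ i : Fin n, fderiv ℝ (fun y => fderiv ℝ f y (EuclideanSpace.single i 1)) x
    (EuclideanSpace.single i 1)

/-- A function on `ℝⁿ` is radially symmetric if it only depends on `‖x‖`. -/
def IsRadial {n : ℕ} (f : EuclideanSpace ℝ (Fin n) → ℝ) : Prop :=
  ∀ x y : EuclideanSpace ℝ (Fin n), ‖x‖ = ‖y‖ → f x = f y

section Aux

variable {E : Type*} [NormedAddCommGroup E] [InnerProductSpace ℝ E]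

theorem myHasFDerivAt_norm {x : E} (hx : x ≠ 0) :
    HasFDerivAt (fun y : E => ‖y‖) (‖x‖⁻¹ • innerSL ℝ x) x := by
  have h1 : HasFDerivAt (fun y : E => ‖y‖ ^ 2) (2 • (innerSL ℝ x)) x :=
    (hasStrictFDerivAt_norm_sq x).hasFDerivAt
  have hxn : ‖x‖ ≠ 0 := norm_ne_zero_iff.2 hx
  have hx2 : (‖x‖ ^ 2 : ℝ) ≠ 0 := pow_ne_zero _ hxn
  have h2 : HasDerivAt Real.sqrt (1 / (2 * Real.sqrt (‖x‖ ^ 2))) (‖x‖ ^ 2) :=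
    Real.hasDerivAt_sqrt hx2
  have h3 := h2.comp_hasFDerivAt x h1
  have heq : (Real.sqrt ∘ fun y : E => ‖y‖ ^ 2) = fun y : E => ‖y‖ := by
    funext y; simp [Function.comp, Real.sqrt_sq (norm_nonneg y)]
  rw [heq] at h3
  convert h3 using 1
  · rfl
  · rfl
  rw [Real.sqrt_sq (norm_nonneg x)]
  ext y
  simp only [ContinuousLinearMap.coe_smul', Pi.smul_apply, ContinuousLinearMap.smul_apply,
    smul_eq_mul]
  field_simp
  ring

abbrev E4 := EuclideanSpace ℝ (Fin 4)

theorem grad4 {u : E4 → ℝ} {g : ℝ → ℝ} (hug : ∀ x, u x = g ‖x‖)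
    (hg : Differentiable ℝ g) {x : E4} (hx : x ≠ 0) :
    HasGradientAt u ((deriv g ‖x‖ * ‖x‖⁻¹) • x) x := by
  have h1 := ((hg ‖x‖).hasDerivAt).comp_hasFDerivAt x (myHasFDerivAt_norm hx)
  have heq : (g ∘ fun y : E4 => ‖y‖) = u := funext fun y => (hug y).symm
  rw [heq] at h1
  rw [hasGradientAt_iff_hasFDerivAt]
  convert h1 using 1
  · rfl
  ext y
  simp only [InnerProductSpace.toDual_apply_apply, real_inner_smul_left,
    ContinuousLinearMap.coe_smul', Pi.smul_apply, innerSL_apply_apply, smul_eq_mul]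
  ring

theorem fderiv_apply4 {u : E4 → ℝ} {g : ℝ → ℝ} (hug : ∀ x, u x = g ‖x‖)
    (hg : Differentiable ℝ g) {y : E4} (hy : y ≠ 0) (i : Fin 4) :
    fderiv ℝ u y (EuclideanSpace.single i 1) = (deriv g ‖y‖ * ‖y‖⁻¹) * y i := by
  have h := (hasGradientAt_iff_hasFDerivAt.mp (grad4 hug hg hy)).fderiv
  rw [h]
  simp only [InnerProductSpace.toDual_apply_apply, real_inner_smul_left]
  rw [real_inner_comm, EuclideanSpace.inner_single_left]
  simp

theorem ptLap4 {u : E4 → ℝ} {g : ℝ → ℝ} (hug : ∀ x, u x = g ‖x‖)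
    (hg : ContDiff ℝ 2 g) {x : E4} (hx : x ≠ 0) :
    ptLap 4 u x = deriv (deriv g) ‖x‖ + 3 * (deriv g ‖x‖ * ‖x‖⁻¹) := by
  have hrne : ‖x‖ ≠ 0 := norm_ne_zero_iff.2 hx
  have hg2 : ContDiff ℝ (1+1) g := by exact_mod_cast hg
  have hgd : Differentiable ℝ g := hg2.differentiable (by norm_num)
  have hv : ContDiff ℝ 1 (deriv g) := (contDiff_succ_iff_deriv.mp hg2).2.2
  have hvd : Differentiable ℝ (deriv g) := hv.differentiable one_ne_zero
  set v := deriv g with hvdef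
  set r := ‖x‖ with hr
  have hnb : {(0 : E4)}ᶜ ∈ nhds x := isOpen_compl_singleton.mem_nhds hx
  have hN := myHasFDerivAt_norm hx
  have key : ∀ i : Fin 4,
      fderiv ℝ (fun y => fderiv ℝ u y (EuclideanSpace.single i 1)) x (EuclideanSpace.single i 1)
        = (v r * r⁻¹) * 1
          + x i * (v r * (-(r ^ 2)⁻¹ * (r⁻¹ * x i)) + r⁻¹ * (deriv v r * (r⁻¹ * x i))) := by
    intro i
    have hA : HasFDerivAt (fun y : E4 => v ‖y‖) (deriv v r • (r⁻¹ • innerSL ℝ x)) x :=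
      ((hvd r).hasDerivAt).comp_hasFDerivAt (h₂ := v) x hN
    have hB : HasFDerivAt (fun y : E4 => ‖y‖⁻¹) ((-(r ^ 2)⁻¹) • (r⁻¹ • innerSL ℝ x)) x :=
      (hasDerivAt_inv hrne).comp_hasFDerivAt (h₂ := fun t : ℝ => t⁻¹) x hN
    have hC : HasFDerivAt (fun y : E4 => y i)
        (EuclideanSpace.proj (𝕜 := ℝ) i : E4 →L[ℝ] ℝ) x :=
      (EuclideanSpace.proj (𝕜 := ℝ) i : E4 →L[ℝ] ℝ).hasFDerivAt
    have hABC := (hA.mul hB).mul hC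
    have heq : (fun y => fderiv ℝ u y (EuclideanSpace.single i 1))
        =ᶠ[nhds x] (fun y : E4 => (v ‖y‖ * ‖y‖⁻¹) * y i) := by
      filter_upwards [hnb] with y hy
      exact fderiv_apply4 hug hgd hy i
    rw [heq.fderiv_eq]
    rw [show (fun y : E4 => (v ‖y‖ * ‖y‖⁻¹) * y i) = ((fun y : E4 => v ‖y‖) * fun y : E4 => ‖y‖⁻¹) * fun y : E4 => y i from rfl, hABC.fderiv]
    have hxe : inner ℝ x (EuclideanSpace.single i (1:ℝ)) = x i := by
      rw [real_inner_comm, EuclideanSpace.inner_single_left]; simp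
    have hproj : (EuclideanSpace.proj (𝕜 := ℝ) i : E4 →L[ℝ] ℝ)
        (EuclideanSpace.single i (1:ℝ)) = 1 := by
      simp [EuclideanSpace.proj, PiLp.proj, PiLp.projₗ]
    simp only [ContinuousLinearMap.add_apply, ContinuousLinearMap.smul_apply,
      innerSL_apply_apply, hxe, hproj, smul_eq_mul]
    rfl
  have hsum : ∑ i, (x i)^2 = r ^ 2 := by
    rw [hr, EuclideanSpace.norm_eq, Real.sq_sqrt (by positivity)]
    simp [sq_abs]
  rw [ptLap]
  rw [Finset.sum_congr rfl (fun i _ => key i)]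
  rw [Finset.sum_add_distrib]
  simp only [Finset.sum_const, Finset.card_univ, Fintype.card_fin, nsmul_eq_mul]
  have : ∑ i : Fin 4, x i * (v r * (-(r ^ 2)⁻¹ * (r⁻¹ * x i)) + r⁻¹ * (deriv v r * (r⁻¹ * x i)))
      = (∑ i : Fin 4, (x i)^2) * (v r * (-(r ^ 2)⁻¹ * r⁻¹) + r⁻¹ * (deriv v r * r⁻¹)) := by
    rw [Finset.sum_mul]
    exact Finset.sum_congr rfl fun i _ => by ring
  rw [this, hsum]
  field_simp
  ring

end Aux

/-- Modified Hardy–Rellich inequality on `Ω = B_R ⊂ ℝ⁴`: for every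
radially symmetric `u ∈ C²(Ω̄)` with `∂_ν u = 0` on `∂Ω`,
`∫_Ω |∇u|²/|x|² ≤ (1/4) ∫_Ω |Δu|²`. -/
theorem statement7 (R : ℝ) (hR : 0 < R)
    (u : EuclideanSpace ℝ (Fin 4) → ℝ) (hu : ContDiff ℝ 2 u) (hrad : IsRadial u)
    (hneumann : ∀ x : EuclideanSpace ℝ (Fin 4), ‖x‖ = R →
      (inner ℝ (gradient u x) x : ℝ) = 0) :
    (∫ x in ball (0 : EuclideanSpace ℝ (Fin 4)) R, ‖gradient u x‖ ^ 2 / ‖x‖ ^ 2)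
      ≤ (1 / 4) * ∫ x in ball (0 : EuclideanSpace ℝ (Fin 4)) R, (ptLap 4 u x) ^ 2 := by
  classical
  set e0 : E4 := EuclideanSpace.single (0 : Fin 4) 1 with he0
  have he0norm : ‖e0‖ = 1 := by simp [he0, EuclideanSpace.norm_single]
  set g : ℝ → ℝ := fun r => u (r • e0) with hgdef
  have hsm : ContDiff ℝ 2 (fun r : ℝ => r • e0) := contDiff_id.smul contDiff_const
  have hg : ContDiff ℝ 2 g := hu.comp hsm
  have hnorm_smul : ∀ r : ℝ, ‖r • e0‖ = |r| := by
    intro r; rw [norm_smul, he0norm]; simp [Real.norm_eq_abs]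
  have hug : ∀ x : E4, u x = g ‖x‖ := by
    intro x
    apply hrad
    rw [hnorm_smul, abs_of_nonneg (norm_nonneg x)]
  have hg2 : ContDiff ℝ (1+1) g := by exact_mod_cast hg
  have hgd : Differentiable ℝ g := hg2.differentiable (by norm_num)
  set v : ℝ → ℝ := deriv g with hvdef
  have hv : ContDiff ℝ 1 v := (contDiff_succ_iff_deriv.mp hg2).2.2
  have hvd : Differentiable ℝ v := hv.differentiable one_ne_zero
  have hvc : Continuous v := hvd.continuous
  have hv'c : Continuous (deriv v) := hv.continuous_deriv le_rfl
  -- v 0 = 0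
  have hgeven : ∀ r : ℝ, g (-r) = g r := by
    intro r
    apply hrad
    rw [hnorm_smul, hnorm_smul, abs_neg]
  have hv0 : v 0 = 0 := by
    have h1 : deriv (fun r : ℝ => g (-r)) 0 = -deriv g (-0) := deriv_comp_neg g 0
    have h2 : (fun r : ℝ => g (-r)) = g := funext hgeven
    rw [h2] at h1
    simp only [neg_zero] at h1
    have := h1
    rw [hvdef]
    linarith [h1]
  -- v R = 0
  have hvR : v R = 0 := by
    have hxne : (R • e0 : E4) ≠ 0 := by
      intro h
      have := hnorm_smul R
      rw [h] at this
      simp only [norm_zero] at this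
      rw [abs_of_pos hR] at this
      linarith
    have hxnorm : ‖(R • e0 : E4)‖ = R := by rw [hnorm_smul, abs_of_pos hR]
    have hgr := (grad4 hug hgd hxne).gradient
    have hne := hneumann (R • e0) hxnorm
    rw [hgr, hxnorm] at hne
    rw [real_inner_smul_left, real_inner_self_eq_norm_sq, hxnorm] at hne
    have hR2 : (R : ℝ) ≠ 0 := ne_of_gt hR
    have : v R * R⁻¹ * R ^ 2 = v R * R := by field_simp
    rw [this] at hne
    rcases mul_eq_zero.mp hne with h | h
    · exact h
    · exact absurd h hR2
  -- bound on |v r| near 0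
  obtain ⟨M, hM⟩ := (isCompact_Icc (a := (0:ℝ)) (b := R)).exists_bound_of_continuousOn
    (hv'c.continuousOn)
  have hM0 : 0 ≤ M := le_trans (norm_nonneg _) (hM 0 ⟨le_rfl, hR.le⟩)
  have hvbound : ∀ r ∈ Icc (0:ℝ) R, |v r| ≤ M * r := by
    intro r hr
    have hconv : Convex ℝ (Icc (0:ℝ) R) := convex_Icc _ _
    have hder : ∀ s ∈ Icc (0:ℝ) R, HasDerivWithinAt v (deriv v s) (Icc 0 R) s :=
      fun s _ => (hvd s).hasDerivAt.hasDerivWithinAt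
    have := hconv.norm_image_sub_le_of_norm_hasDerivWithin_le hder hM ⟨le_rfl, hR.le⟩ hr
    rw [hv0, sub_zero, sub_zero] at this
    rwa [Real.norm_eq_abs, Real.norm_eq_abs, abs_of_nonneg hr.1] at this
  -- continuity of ptLap
  have hu2 : ContDiff ℝ ((1:ℕ∞)+1) u := by exact_mod_cast hu
  have hfd1 : ContDiff ℝ 1 (fderiv ℝ u) := hu2.fderiv_right (le_refl _)
  have hptcont : Continuous (ptLap 4 u) := by
    apply continuous_finset_sum
    intro i _
    have h1 : ContDiff ℝ 1 (fun y => fderiv ℝ u y (EuclideanSpace.single i 1)) :=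
      hfd1.clm_apply contDiff_const
    have h2 : Continuous (fderiv ℝ (fun y => fderiv ℝ u y (EuclideanSpace.single i 1))) :=
      h1.continuous_fderiv one_ne_zero
    exact h2.clm_apply continuous_const
  -- continuity of gradient
  have hgradcont : Continuous (gradient u) := by
    have h1 : Continuous (fderiv ℝ u) := hu.continuous_fderiv (by norm_num)
    exact (InnerProductSpace.toDual ℝ E4).symm.continuous.comp h1
  -- integrability of A
  have hAint : IntegrableOn (fun x : E4 => (ptLap 4 u x) ^ 2) (ball 0 R) volume := by
    apply IntegrableOn.mono_set (t := closedBall (0:E4) R) _ ball_subset_closedBall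
    exact ((hptcont.pow 2).continuousOn).integrableOn_compact (isCompact_closedBall _ _)
  -- integrability of B
  have hBmeas : AEStronglyMeasurable (fun x : E4 => ‖gradient u x‖ ^ 2 / ‖x‖ ^ 2) volume := by
    apply Measurable.aestronglyMeasurable
    exact ((hgradcont.norm.pow 2).measurable).div ((continuous_norm.pow 2).measurable)
  have hae0 : ∀ᵐ x : E4 ∂volume, x ≠ 0 := by
    rw [ae_iff]
    simp only [not_ne_iff]
    have : {x : E4 | x = 0} = {0} := by ext; simp
    rw [this]
    exact measure_singleton 0
  have hgradnorm : ∀ x : E4, x ≠ 0 → ‖gradient u x‖ ^ 2 = v ‖x‖ ^ 2 := by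
    intro x hx
    have hgr := (grad4 hug hgd hx).gradient
    rw [hgr, norm_smul]
    have hrne : ‖x‖ ≠ 0 := norm_ne_zero_iff.2 hx
    rw [mul_pow, Real.norm_eq_abs, sq_abs, mul_pow]
    field_simp
    rfl
  have hBint : IntegrableOn (fun x : E4 => ‖gradient u x‖ ^ 2 / ‖x‖ ^ 2) (ball 0 R) volume := by
    apply Measure.integrableOn_of_bounded (M := M ^ 2) (measure_ball_lt_top).ne hBmeas
    rw [ae_restrict_iff' measurableSet_ball]
    filter_upwards [hae0] with x hx hxball
    have hrpos : 0 < ‖x‖ := norm_pos_iff.2 hx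
    have hrlt : ‖x‖ < R := by simpa [dist_zero_right] using mem_ball.mp hxball
    rw [Real.norm_eq_abs, hgradnorm x hx]
    rw [abs_of_nonneg (by positivity)]
    rw [div_le_iff₀ (by positivity)]
    have hb := hvbound ‖x‖ ⟨hrpos.le, hrlt.le⟩
    calc v ‖x‖ ^ 2 ≤ (M * ‖x‖) ^ 2 := by
          rw [← sq_abs (v ‖x‖)]
          apply pow_le_pow_left₀ (abs_nonneg _) hb
      _ = M ^ 2 * ‖x‖ ^ 2 := by ring
  -- the difference integrand
  set D : E4 → ℝ := fun x => (1/4) * (ptLap 4 u x) ^ 2 - ‖gradient u x‖ ^ 2 / ‖x‖ ^ 2 with hDdef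
  have hDint : IntegrableOn D (ball 0 R) volume := (hAint.const_mul _).sub hBint
  -- 1D profile
  set w : ℝ → ℝ := fun s =>
    (1/4) * (deriv v s + 3 * (v s * s⁻¹)) ^ 2 - v s ^ 2 / s ^ 2 with hwdef
  set h1 : ℝ → ℝ := (Ioo (0:ℝ) R).indicator w with hh1def
  -- key a.e. identity
  have hkey : (ball (0:E4) R).indicator D =ᵐ[volume] fun x => h1 ‖x‖ := by
    filter_upwards [hae0] with x hx
    have hrpos : 0 < ‖x‖ := norm_pos_iff.2 hx
    by_cases hxb : x ∈ ball (0:E4) R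
    · have hrlt : ‖x‖ < R := by simpa [dist_zero_right] using mem_ball.mp hxb
      rw [indicator_of_mem hxb, hh1def, indicator_of_mem (by exact ⟨hrpos, hrlt⟩ : ‖x‖ ∈ Ioo 0 R)]
      rw [hDdef, hwdef]
      simp only
      rw [ptLap4 hug hg hx, hgradnorm x hx]
    · have hrge : ¬ (‖x‖ ∈ Ioo (0:ℝ) R) := by
        intro h
        exact hxb (mem_ball.mpr (by simpa [dist_zero_right] using h.2))
      rw [indicator_of_notMem hxb, hh1def, indicator_of_notMem hrge]
  -- polar coordinates
  have hpolar : ∫ x in ball (0:E4) R, D x ∂volume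
      = (4 : ℕ) • (volume (ball (0:E4) 1)).toReal • ∫ s in Ioi (0:ℝ), s ^ 3 • h1 s := by
    rw [← integral_indicator measurableSet_ball]
    rw [integral_congr_ae hkey]
    have := integral_fun_norm_addHaar (volume : Measure E4) h1
    simp only [finrank_euclideanSpace, Fintype.card_fin] at this
    convert this using 2
    rfl
  -- 1D integrand identity and positivity
  set P : ℝ → ℝ := fun s => (1/4) * (v s + s * deriv v s) ^ 2 * s with hPdef
  set Q : ℝ → ℝ := fun s => v s * deriv v s * s ^ 2 + v s ^ 2 * s with hQdef
  have hint1 : (fun s : ℝ => s ^ 3 • h1 s)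
      = (Ioo (0:ℝ) R).indicator (fun s => P s + Q s) := by
    funext s
    by_cases hs : s ∈ Ioo (0:ℝ) R
    · rw [smul_eq_mul, hh1def, indicator_of_mem hs, indicator_of_mem hs]
      have hsne : s ≠ 0 := ne_of_gt hs.1
      rw [hwdef, hPdef, hQdef]
      simp only
      field_simp
      ring
    · rw [smul_eq_mul, hh1def, indicator_of_notMem hs, indicator_of_notMem hs, mul_zero]
  have hPc : Continuous P := by
    rw [hPdef]
    exact (continuous_const.mul ((hvc.add (continuous_id.mul hv'c)).pow 2)).mul continuous_id
  have hQc : Continuous Q := by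
    rw [hQdef]
    exact ((hvc.mul hv'c).mul (continuous_pow 2)).add ((hvc.pow 2).mul continuous_id)
  have hPint : IntegrableOn P (Ioo (0:ℝ) R) volume :=
    (hPc.continuousOn.integrableOn_compact isCompact_Icc).mono_set Ioo_subset_Icc_self
  have hQint : IntegrableOn Q (Ioo (0:ℝ) R) volume :=
    (hQc.continuousOn.integrableOn_compact isCompact_Icc).mono_set Ioo_subset_Icc_self
  have hQzero : ∫ s in Ioo (0:ℝ) R, Q s = 0 := by
    set F : ℝ → ℝ := fun s => v s ^ 2 * s ^ 2 / 2 with hFdef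
    have hF : ∀ s : ℝ, HasDerivAt F (Q s) s := by
      intro s
      have hva : HasDerivAt v (deriv v s) s := (hvd s).hasDerivAt
      have h1 : HasDerivAt (fun t => v t ^ 2) (2 * v s * deriv v s) s := by
        have := hva.pow 2
        convert this using 1
        · rfl
        · rfl
        · rfl
        ring
      have h2 : HasDerivAt (fun t : ℝ => t ^ 2) (2 * s) s := by
        simpa using hasDerivAt_pow 2 s
      have h3 := (h1.mul h2).div_const 2
      convert h3 using 1
      · rfl
      · rfl
      · rfl
      rw [hQdef]
      simp only
      ring
    have hcont : Continuous Q := hQc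
    have hFTC : ∫ s in (0:ℝ)..R, Q s = F R - F 0 :=
      intervalIntegral.integral_eq_sub_of_hasDerivAt (fun s _ => hF s)
        (hcont.intervalIntegrable 0 R)
    have hFR : F R = 0 := by rw [hFdef]; simp [hvR]
    have hF0 : F 0 = 0 := by rw [hFdef]; simp
    rw [hFR, hF0, sub_zero] at hFTC
    rw [← MeasureTheory.integral_Ioc_eq_integral_Ioo]
    rw [← intervalIntegral.integral_of_le hR.le]
    exact hFTC
  have hPnonneg : 0 ≤ ∫ s in Ioo (0:ℝ) R, P s := by
    apply setIntegral_nonneg measurableSet_Ioo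
    intro s hs
    rw [hPdef]
    simp only
    have hs0 : (0:ℝ) ≤ s := hs.1.le
    have h4 : (0:ℝ) ≤ 1/4 := by norm_num
    exact mul_nonneg (mul_nonneg h4 (sq_nonneg _)) hs0
  have h1d : 0 ≤ ∫ s in Ioi (0:ℝ), s ^ 3 • h1 s := by
    rw [hint1, setIntegral_indicator measurableSet_Ioo,
      inter_eq_self_of_subset_right Ioo_subset_Ioi_self,
      integral_add hPint hQint, hQzero, add_zero]
    exact hPnonneg
  have hDnonneg : 0 ≤ ∫ x in ball (0:E4) R, D x := by
    rw [hpolar]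
    simp only [nsmul_eq_mul, smul_eq_mul]
    have := ENNReal.toReal_nonneg (a := volume (ball (0:E4) 1))
    apply mul_nonneg (by norm_num)
    exact mul_nonneg this h1d
  have hsplit : ∫ x in ball (0:E4) R, D x
      = (1/4) * (∫ x in ball (0:E4) R, (ptLap 4 u x) ^ 2)
        - ∫ x in ball (0:E4) R, ‖gradient u x‖ ^ 2 / ‖x‖ ^ 2 := by
    rw [hDdef]
    rw [integral_sub (hAint.const_mul _) hBint, integral_const_mul]
  linarith [hDnonneg, hsplit]
end
end

section
/- Let n ≥ 2, R > 0, Ω = B_R ⊂ ℝⁿ, and let v ∈ C⁴(Ω̄) be radially symmetric with ∂_ν v = 0 on ∂Ω (i.e., ∇v(x)·x = 0 for |x| = R). Then −∫_Ω (Δ²v)(x·∇v) dx = ((n−4)/2)∫_Ω |Δv|² dx + (ω_n R^n/2)·(v_{rr}(R))², where Δ²v = Δ(Δv) is the bilaplacian, v_{rr}(R) denotes the second radial derivative D²v(x)[x/|x|, x/|x|] at any point with |x| = R, and ω_n is the surface measure of the unit sphere in ℝⁿ. -/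
open MeasureTheory Metric Set Filter

noncomputable section

/-- The surface measure `ω_n = n·|B₁|` of the unit sphere in `ℝⁿ`. -/
def sphereMeasure (n : ℕ) : ℝ :=
  (n : ℝ) * (volume (ball (0 : EuclideanSpace ℝ (Fin n)) 1)).toReal

variable {n : ℕ}

lemma radial_hasFDerivAt (f : EuclideanSpace ℝ (Fin n) → ℝ) (u u1 : ℝ → ℝ)
    (hu1 : ∀ r > (0:ℝ), HasDerivAt u (u1 r) r)
    {x : EuclideanSpace ℝ (Fin n)} (hx : x ≠ 0)
    (hf : ∀ y, y ≠ 0 → f y = u ‖y‖) :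
    HasFDerivAt f ((u1 ‖x‖ / ‖x‖) • innerSL ℝ x) x := by
  have hr : (0:ℝ) < ‖x‖ := norm_pos_iff.2 hx
  set U : ℝ → ℝ := fun s => u (Real.sqrt s) with hU
  have hsq : Real.sqrt (‖x‖^2) = ‖x‖ := Real.sqrt_sq (norm_nonneg x)
  have hUd : HasDerivAt U (u1 ‖x‖ * (1 / (2 * Real.sqrt (‖x‖^2)))) (‖x‖^2) := by
    have h1 : HasDerivAt Real.sqrt (1 / (2 * Real.sqrt (‖x‖^2))) (‖x‖^2) :=
      Real.hasDerivAt_sqrt (by positivity)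
    have h2 : HasDerivAt u (u1 ‖x‖) (Real.sqrt (‖x‖^2)) := by rw [hsq]; exact hu1 _ hr
    exact h2.comp (‖x‖^2) h1
  have hq : HasFDerivAt (fun y : EuclideanSpace ℝ (Fin n) => ‖y‖^2) (2 • (innerSL ℝ x)) x :=
    (hasStrictFDerivAt_norm_sq x).hasFDerivAt
  have hcomp : HasFDerivAt (U ∘ fun y => ‖y‖^2)
      ((u1 ‖x‖ * (1 / (2 * Real.sqrt (‖x‖^2)))) • (2 • (innerSL ℝ x))) x :=
    hUd.comp_hasFDerivAt x hq
  have heq : (u1 ‖x‖ * (1 / (2 * Real.sqrt (‖x‖^2)))) • (2 • (innerSL ℝ x))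
      = (u1 ‖x‖ / ‖x‖) • innerSL ℝ x := by
    rw [hsq]
    ext w
    simp only [ContinuousLinearMap.smul_apply, smul_eq_mul, ContinuousLinearMap.coe_smul',
      Pi.smul_apply, nsmul_eq_mul, Nat.cast_ofNat]
    field_simp
  rw [heq] at hcomp
  apply hcomp.congr_of_eventuallyEq
  have hev : ∀ᶠ y in nhds x, y ≠ 0 := (isOpen_compl_singleton).mem_nhds hx
  filter_upwards [hev] with y hy
  rw [hf y hy, hU]
  simp [Real.sqrt_sq (norm_nonneg y)]

lemma radial_fderiv_apply (f : EuclideanSpace ℝ (Fin n) → ℝ) (u u1 : ℝ → ℝ)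
    (hu1 : ∀ r > (0:ℝ), HasDerivAt u (u1 r) r)
    {x : EuclideanSpace ℝ (Fin n)} (hx : x ≠ 0)
    (hf : ∀ y, y ≠ 0 → f y = u ‖y‖) (w : EuclideanSpace ℝ (Fin n)) :
    fderiv ℝ f x w = u1 ‖x‖ / ‖x‖ * (inner ℝ x w : ℝ) := by
  rw [(radial_hasFDerivAt f u u1 hu1 hx hf).fderiv]
  simp [innerSL_apply_apply]

lemma radial_fderiv2 (f : EuclideanSpace ℝ (Fin n) → ℝ) (u u1 u2 : ℝ → ℝ)
    (hu1 : ∀ r > (0:ℝ), HasDerivAt u (u1 r) r)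
    (hu2 : ∀ r > (0:ℝ), HasDerivAt u1 (u2 r) r)
    {x : EuclideanSpace ℝ (Fin n)} (hx : x ≠ 0)
    (hf : ∀ y, y ≠ 0 → f y = u ‖y‖) (w w' : EuclideanSpace ℝ (Fin n)) :
    fderiv ℝ (fun y => fderiv ℝ f y w) x w'
      = (u2 ‖x‖ / ‖x‖^2 - u1 ‖x‖ / ‖x‖^3) * ((inner ℝ x w : ℝ) * (inner ℝ x w' : ℝ))
        + u1 ‖x‖ / ‖x‖ * (inner ℝ w w' : ℝ) := by
  have hr : (0:ℝ) < ‖x‖ := norm_pos_iff.2 hx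
  -- the scalar coefficient function c y = u1 ‖y‖ / ‖y‖, as C ∘ (‖·‖²)
  set C : ℝ → ℝ := fun s => u1 (Real.sqrt s) / Real.sqrt s with hC
  have hcx : ∀ y : EuclideanSpace ℝ (Fin n), C (‖y‖^2) = u1 ‖y‖ / ‖y‖ := by
    intro y; rw [hC]; simp [Real.sqrt_sq (norm_nonneg y)]
  -- derivative of C at ‖x‖²
  have hCd : HasDerivAt C (u2 ‖x‖ / (2*‖x‖^2) - u1 ‖x‖ / (2*‖x‖^3)) (‖x‖^2) := by
    have hsq : Real.sqrt (‖x‖^2) = ‖x‖ := Real.sqrt_sq (norm_nonneg x)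
    have h1 : HasDerivAt Real.sqrt (1 / (2 * Real.sqrt (‖x‖^2))) (‖x‖^2) :=
      Real.hasDerivAt_sqrt (by positivity)
    have h2 : HasDerivAt (fun r => u1 r / r) (u2 ‖x‖ / ‖x‖ - u1 ‖x‖ / ‖x‖^2)
        (Real.sqrt (‖x‖^2)) := by
      rw [hsq]
      have := (hu2 _ hr).div (hasDerivAt_id ‖x‖) hr.ne'
      refine this.congr_deriv ?_
      simp only [id]
      field_simp
    have h3 : HasDerivAt C ((u2 ‖x‖ / ‖x‖ - u1 ‖x‖ / ‖x‖^2) * (1 / (2*‖x‖))) (‖x‖^2) := by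
      have := h2.comp (‖x‖^2) h1
      rw [hsq] at this
      exact this
    convert h3 using 1
    field_simp
  -- eventually, fderiv f y w = C (‖y‖²) * ⟪w, y⟫
  have hev : (fun y => fderiv ℝ f y w) =ᶠ[nhds x]
      (fun y => C (‖y‖^2) * (inner ℝ w y : ℝ)) := by
    filter_upwards [(isOpen_compl_singleton).mem_nhds hx] with y hy
    rw [radial_fderiv_apply f u u1 hu1 hy hf w, hcx, real_inner_comm]
  -- differentiate the RHS
  have hq : HasFDerivAt (fun y : EuclideanSpace ℝ (Fin n) => ‖y‖^2) (2 • (innerSL ℝ x)) x :=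
    (hasStrictFDerivAt_norm_sq x).hasFDerivAt
  have hc : HasFDerivAt (fun y : EuclideanSpace ℝ (Fin n) => C (‖y‖^2))
      ((u2 ‖x‖ / (2*‖x‖^2) - u1 ‖x‖ / (2*‖x‖^3)) • (2 • (innerSL ℝ x))) x := by
    have := hCd.comp_hasFDerivAt x hq; exact this
  have hl : HasFDerivAt (fun y : EuclideanSpace ℝ (Fin n) => (inner ℝ w y : ℝ))
      (innerSL ℝ w) x := (innerSL ℝ w).hasFDerivAt
  have hmul := hc.mul hl
  have := (hmul.congr_of_eventuallyEq hev).fderiv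
  rw [this]
  simp only [ContinuousLinearMap.add_apply, ContinuousLinearMap.smul_apply,
    ContinuousLinearMap.coe_smul', Pi.smul_apply, innerSL_apply_apply, smul_eq_mul,
    nsmul_eq_mul, Nat.cast_ofNat]
  rw [hcx]
  have h1 : (inner ℝ w x : ℝ) = (inner ℝ x w : ℝ) := real_inner_comm x w
  rw [h1]
  field_simp
  ring

lemma radial_ptLap (f : EuclideanSpace ℝ (Fin n) → ℝ) (u u1 u2 : ℝ → ℝ)
    (hu1 : ∀ r > (0:ℝ), HasDerivAt u (u1 r) r)
    (hu2 : ∀ r > (0:ℝ), HasDerivAt u1 (u2 r) r)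
    {x : EuclideanSpace ℝ (Fin n)} (hx : x ≠ 0)
    (hf : ∀ y, y ≠ 0 → f y = u ‖y‖) :
    ptLap n f x = u2 ‖x‖ + ((n:ℝ) - 1) * u1 ‖x‖ / ‖x‖ := by
  have hr : (0:ℝ) < ‖x‖ := norm_pos_iff.2 hx
  have hterm : ∀ i : Fin n,
      fderiv ℝ (fun y => fderiv ℝ f y (EuclideanSpace.single i 1)) x (EuclideanSpace.single i 1)
      = (u2 ‖x‖ / ‖x‖^2 - u1 ‖x‖ / ‖x‖^3) * (x i)^2 + u1 ‖x‖ / ‖x‖ := by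
    intro i
    rw [radial_fderiv2 f u u1 u2 hu1 hu2 hx hf]
    have h1 : (inner ℝ x (EuclideanSpace.single i (1:ℝ)) : ℝ) = x i := by
      rw [real_inner_comm]
      simp [EuclideanSpace.inner_single_left]
    have h2 : (inner ℝ (EuclideanSpace.single i (1:ℝ)) (EuclideanSpace.single i (1:ℝ)) : ℝ) = 1 := by
      simp [EuclideanSpace.inner_single_left, EuclideanSpace.single_apply]
    rw [h1, h2]
    ring
  rw [ptLap]
  rw [Finset.sum_congr rfl (fun i _ => hterm i)]
  rw [Finset.sum_add_distrib, ← Finset.mul_sum, Finset.sum_const]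
  have hsum : ∑ i : Fin n, (x i)^2 = ‖x‖^2 := by
    rw [EuclideanSpace.norm_eq, Real.sq_sqrt (by positivity)]
    simp
  rw [hsum]
  simp only [Finset.card_univ, Fintype.card_fin, nsmul_eq_mul]
  field_simp
  ring

lemma oneD (m : ℕ) (R : ℝ) (hR : 0 < R) (g1 g2 g3 g4 : ℝ → ℝ)
    (hd1 : ∀ r, HasDerivAt g1 (g2 r) r) (hd2 : ∀ r, HasDerivAt g2 (g3 r) r)
    (hd3 : ∀ r, HasDerivAt g3 (g4 r) r)
    (hc4 : Continuous g4)
    (h10 : g1 0 = 0) (h1R : g1 R = 0)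
    (hb Hb : ℝ → ℝ) (hbc : Continuous hb) (Hbc : Continuous Hb)
    (hbe : ∀ r, 0 < r → hb r = g2 r + ((m:ℝ)+1) * g1 r / r)
    (Hbe : ∀ r, 0 < r → Hb r = (g4 r + ((m:ℝ)+1)*(g3 r/r - 2*g2 r/r^2 + 2*g1 r/r^3))
      + ((m:ℝ)+1)*(g3 r + ((m:ℝ)+1)*(g2 r/r - g1 r/r^2))/r) :
    -(∫ r in Ioc (0:ℝ) R, r^(m+1) * (Hb r * (r * g1 r)))
      = ((m:ℝ)-2)/2 * (∫ r in Ioc (0:ℝ) R, r^(m+1) * hb r^2)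
        + R^(m+2)/2 * (g2 R)^2 := by
  have hc1 : Continuous g1 := by
    rw [continuous_iff_continuousAt]; exact fun r => (hd1 r).continuousAt
  have hc2 : Continuous g2 := by
    rw [continuous_iff_continuousAt]; exact fun r => (hd2 r).continuousAt
  have hc3 : Continuous g3 := by
    rw [continuous_iff_continuousAt]; exact fun r => (hd3 r).continuousAt
  set FI : ℝ → ℝ := fun r => r^(m+1) * (Hb r * (r * g1 r)) with hFI
  set FJ : ℝ → ℝ := fun r => r^(m+1) * hb r^2 with hFJ
  have hFIc : Continuous FI := by fun_prop
  have hFJc : Continuous FJ := by fun_prop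
  set Φ : ℝ → ℝ := fun r => r^(m+2) * (g1 r * g3 r) + (m:ℝ) * (r^(m+1) * (g1 r * g2 r))
      - (1/2) * (r^(m+2) * g2 r^2) + (((m:ℝ)+1)*((m:ℝ)-3)/2) * (r^m * g1 r^2) with hΦ
  have hΦc : Continuous Φ := by fun_prop
  -- derivative of Φ at r > 0
  have hΦd : ∀ r : ℝ, 0 < r → HasDerivAt Φ (FI r + ((m:ℝ)-2)/2 * FJ r) r := by
    intro r hr
    have P1 : HasDerivAt (fun t => t^(m+2) * (g1 t * g3 t))
        (((m:ℝ)+2) * r^(m+1) * (g1 r * g3 r) + r^(m+2) * (g2 r * g3 r + g1 r * g4 r)) r := by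
      have := (hasDerivAt_pow (m+2) r).mul ((hd1 r).mul (hd3 r))
      refine this.congr_deriv ?_
      simp only [Pi.mul_apply, Pi.pow_apply]
      push_cast
      ring
    have P2 : HasDerivAt (fun t => t^(m+1) * (g1 t * g2 t))
        (((m:ℝ)+1) * r^m * (g1 r * g2 r) + r^(m+1) * (g2 r * g2 r + g1 r * g3 r)) r := by
      have := (hasDerivAt_pow (m+1) r).mul ((hd1 r).mul (hd2 r))
      refine this.congr_deriv ?_
      simp only [Pi.mul_apply, Pi.pow_apply]
      push_cast
      ring
    have P3 : HasDerivAt (fun t => t^(m+2) * g2 t^2)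
        (((m:ℝ)+2) * r^(m+1) * g2 r^2 + r^(m+2) * (2 * g2 r * g3 r)) r := by
      have := (hasDerivAt_pow (m+2) r).mul ((hd2 r).pow 2)
      refine this.congr_deriv ?_
      simp only [Pi.mul_apply, Pi.pow_apply]
      push_cast
      ring
    have P4 : HasDerivAt (fun t => t^m * g1 t^2)
        ((m:ℝ) * r^m / r * g1 r^2 + r^m * (2 * g1 r * g2 r)) r := by
      have := (hasDerivAt_pow m r).mul ((hd1 r).pow 2)
      refine this.congr_deriv ?_
      simp only [Pi.mul_apply, Pi.pow_apply]
      have hm : (m:ℝ) * r^(m-1) = (m:ℝ) * r^m / r := by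
        cases m with
        | zero => simp
        | succ k =>
          rw [Nat.succ_sub_one, pow_succ]
          field_simp
      rw [hm]
      push_cast
      ring
    have := ((P1.add (P2.const_mul (m:ℝ))).sub (P3.const_mul (1/2))).add
      (P4.const_mul (((m:ℝ)+1)*((m:ℝ)-3)/2))
    refine this.congr_deriv ?_
    simp only [hFI, hFJ]
    rw [Hbe r hr, hbe r hr]
    field_simp
    ring
  -- FTC on [ε, R] for ε ∈ (0, R)
  have key : ∀ ε : ℝ, ε ∈ Ioo 0 R →
      ((∫ r in ε..R, FI r) + ((m:ℝ)-2)/2 * ∫ r in ε..R, FJ r) = Φ R - Φ ε := by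
    intro ε hε
    have h1 : ∫ r in ε..R, (FI r + ((m:ℝ)-2)/2 * FJ r) = Φ R - Φ ε := by
      apply intervalIntegral.integral_eq_sub_of_hasDerivAt
      · intro r hrm
        rw [uIcc_of_le hε.2.le] at hrm
        exact hΦd r (lt_of_lt_of_le hε.1 hrm.1)
      · exact (hFIc.add ((continuous_const.mul hFJc))).intervalIntegrable _ _
    rw [← h1, intervalIntegral.integral_add (g := fun r => ((m:ℝ)-2)/2 * FJ r) (hFIc.intervalIntegrable _ _)
      (((continuous_const.mul hFJc)).intervalIntegrable _ _), intervalIntegral.integral_const_mul]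
  -- limits as ε → 0⁺
  have hprim : ∀ f : ℝ → ℝ, Continuous f →
      Tendsto (fun ε => ∫ r in ε..R, f r) (nhdsWithin 0 (Ioi 0)) (nhds (∫ r in (0:ℝ)..R, f r)) := by
    intro f hf
    have : Continuous fun ε => ∫ r in ε..R, f r := by
      have h := intervalIntegral.continuous_primitive (μ := volume) (fun a b => hf.intervalIntegrable a b) R
      have : (fun ε => ∫ r in ε..R, f r) = fun ε => -∫ r in R..ε, f r := by
        ext ε; rw [intervalIntegral.integral_symm]
      rw [this]
      exact h.neg
    exact (this.tendsto 0).mono_left nhdsWithin_le_nhds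
  have hTΦ : Tendsto (fun ε => Φ R - Φ ε) (nhdsWithin 0 (Ioi 0)) (nhds (Φ R - Φ 0)) :=
    ((hΦc.tendsto 0).const_sub (Φ R)).mono_left nhdsWithin_le_nhds
  have hev : (fun ε => (∫ r in ε..R, FI r) + ((m:ℝ)-2)/2 * ∫ r in ε..R, FJ r)
      =ᶠ[nhdsWithin 0 (Ioi 0)] (fun ε => Φ R - Φ ε) := by
    filter_upwards [Ioo_mem_nhdsGT_of_mem (by simp [hR] : (0:ℝ) ∈ Ico (0:ℝ) R)] with ε hε
    exact key ε hε
  have hlim : (∫ r in (0:ℝ)..R, FI r) + ((m:ℝ)-2)/2 * (∫ r in (0:ℝ)..R, FJ r) = Φ R - Φ 0 := by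
    have h1 := ((hprim FI hFIc).add ((hprim FJ hFJc).const_mul (((m:ℝ)-2)/2)))
    have h2 := h1.congr' hev
    exact tendsto_nhds_unique h2 hTΦ
  have hΦ0 : Φ 0 = 0 := by
    rw [hΦ]; simp [h10]
  have hΦR : Φ R = -(1/2) * (R^(m+2) * g2 R^2) := by
    rw [hΦ]; simp [h1R]
  rw [hΦ0, hΦR, intervalIntegral.integral_of_le hR.le, intervalIntegral.integral_of_le hR.le]
    at hlim
  rw [← hFI, ← hFJ] at *
  linarith [hlim]

lemma ptLap_contDiff {n k : ℕ} {f : EuclideanSpace ℝ (Fin n) → ℝ}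
    (hf : ContDiff ℝ (k+2 : ℕ) f) : ContDiff ℝ (k : ℕ) (ptLap n f) := by
  have : ptLap n f = fun x => ∑ i : Fin n,
      fderiv ℝ (fun y => fderiv ℝ f y (EuclideanSpace.single i 1)) x (EuclideanSpace.single i 1) :=
    rfl
  rw [this]
  apply ContDiff.sum
  intro i _
  have h1 : ContDiff ℝ (k+1 : ℕ) (fun y => fderiv ℝ f y (EuclideanSpace.single i 1)) := by
    have h2 : ContDiff ℝ (k+1 : ℕ) (fderiv ℝ f) := by
      apply hf.fderiv_right
      norm_cast
    exact (ContinuousLinearMap.apply ℝ ℝ (EuclideanSpace.single i 1)).contDiff.comp h2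
  have h3 : ContDiff ℝ (k : ℕ) (fderiv ℝ (fun y => fderiv ℝ f y (EuclideanSpace.single i 1))) := by
    apply h1.fderiv_right
    norm_cast
  exact (ContinuousLinearMap.apply ℝ ℝ (EuclideanSpace.single i 1)).contDiff.comp h3


lemma polar {n : ℕ} (hn : 1 ≤ n) (R : ℝ)
    (G : EuclideanSpace ℝ (Fin n) → ℝ) (p : ℝ → ℝ)
    (hGp : ∀ y : EuclideanSpace ℝ (Fin n), y ≠ 0 → G y = p ‖y‖) :
    ∫ x in ball (0 : EuclideanSpace ℝ (Fin n)) R, G x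
      = sphereMeasure n * ∫ r in Ioc (0:ℝ) R, r^(n-1) * p r := by
  haveI : Nontrivial (EuclideanSpace ℝ (Fin n)) := by
    refine ⟨0, EuclideanSpace.single ⟨0, by omega⟩ 1, fun h => ?_⟩
    have := congrArg norm h
    rw [norm_zero, EuclideanSpace.norm_single] at this
    norm_num at this
  set f : ℝ → ℝ := Set.indicator (Ioo 0 R) p with hf
  have step1 : ∫ x in ball (0 : EuclideanSpace ℝ (Fin n)) R, G x
      = ∫ x : EuclideanSpace ℝ (Fin n), f ‖x‖ := by
    rw [← integral_indicator measurableSet_ball]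
    apply integral_congr_ae
    have hsub : {x : EuclideanSpace ℝ (Fin n) |
        ¬ (ball (0 : EuclideanSpace ℝ (Fin n)) R).indicator G x = f ‖x‖} ⊆ {0} := by
      intro x hx
      simp only [mem_setOf_eq] at hx
      by_contra hx0
      apply hx
      have hxne : x ≠ 0 := by simpa [Set.mem_singleton_iff] using hx0
      have hnorm : (0:ℝ) < ‖x‖ := norm_pos_iff.2 hxne
      by_cases hmem : x ∈ ball (0 : EuclideanSpace ℝ (Fin n)) R
      · have hR' : ‖x‖ < R := by simpa [mem_ball, dist_eq_norm] using hmem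
        rw [Set.indicator_of_mem hmem, hf, Set.indicator_of_mem (by exact ⟨hnorm, hR'⟩)]
        exact hGp x hxne
      · have hR' : ¬ ‖x‖ < R := by simpa [mem_ball, dist_eq_norm] using hmem
        rw [Set.indicator_of_notMem hmem, hf, Set.indicator_of_notMem]
        simp only [mem_Ioo, not_and]
        intro _; exact hR'
    exact measure_mono_null hsub (measure_singleton 0)
  rw [step1, integral_fun_norm_addHaar volume f, finrank_euclideanSpace_fin]
  have step2 : ∫ y in Ioi (0:ℝ), y ^ (n-1) • f y = ∫ r in Ioc (0:ℝ) R, r^(n-1) * p r := by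
    have : ∀ y : ℝ, y ^ (n-1) • f y = Set.indicator (Ioo 0 R) (fun t => t^(n-1) * p t) y := by
      intro y
      by_cases hy : y ∈ Ioo (0:ℝ) R
      · rw [hf, Set.indicator_of_mem hy, Set.indicator_of_mem hy, smul_eq_mul]
      · rw [hf, Set.indicator_of_notMem hy, Set.indicator_of_notMem hy, smul_zero]
    simp_rw [this]
    rw [setIntegral_indicator measurableSet_Ioo]
    rw [show Ioi (0:ℝ) ∩ Ioo 0 R = Ioo 0 R by
      apply inter_eq_self_of_subset_right; exact Ioo_subset_Ioi_self]
    exact (integral_Ioc_eq_integral_Ioo).symm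
  rw [step2, nsmul_eq_mul, smul_eq_mul, sphereMeasure, mul_assoc]
  rfl

/-- For a radially symmetric `v ∈ C⁴(Ω̄)` on `Ω = B_R ⊂ ℝⁿ` with
`∂_ν v = 0` on `∂Ω`,
`−∫_Ω (Δ²v)(x·∇v) dx = ((n−4)/2)∫_Ω |Δv|² dx + (ω_n Rⁿ/2)·(v_{rr}(R))²`, where
`v_{rr}(R) = D²v(x₀)[x₀/R, x₀/R]` for any `x₀` with `|x₀| = R`. -/
theorem statement17 (n : ℕ) (hn : 2 ≤ n) (R : ℝ) (hR : 0 < R)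
    (v : EuclideanSpace ℝ (Fin n) → ℝ) (hv : ContDiff ℝ 4 v) (hrad : IsRadial v)
    (hneumann : ∀ x : EuclideanSpace ℝ (Fin n), ‖x‖ = R →
      (inner ℝ (gradient v x) x : ℝ) = 0) :
    ∀ x₀ : EuclideanSpace ℝ (Fin n), ‖x₀‖ = R →
      -(∫ x in ball (0 : EuclideanSpace ℝ (Fin n)) R,
          ptLap n (fun y => ptLap n v y) x * (inner ℝ x (gradient v x) : ℝ))
        = (((n : ℝ) - 4) / 2) *
            (∫ x in ball (0 : EuclideanSpace ℝ (Fin n)) R, (ptLap n v x) ^ 2)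
          + (sphereMeasure n * R ^ n / 2) *
            (fderiv ℝ (fun y => fderiv ℝ v y (R⁻¹ • x₀)) x₀ (R⁻¹ • x₀)) ^ 2 := by
  obtain ⟨m, rfl⟩ : ∃ m, n = m + 2 := ⟨n - 2, by omega⟩
  intro x₀ hx₀
  have hx0ne : x₀ ≠ 0 := by
    intro h; rw [h, norm_zero] at hx₀; exact absurd hx₀.symm (ne_of_gt hR)
  set e : EuclideanSpace ℝ (Fin (m+2)) := R⁻¹ • x₀ with he
  have hee : ‖e‖ = 1 := by
    rw [he, norm_smul, hx₀, Real.norm_eq_abs, abs_of_pos (inv_pos.2 hR)]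
    field_simp
  -- the radial profile and its derivatives
  set g : ℝ → ℝ := fun r => v (r • e) with hg
  have hgC : ContDiff ℝ 4 g := hv.comp (contDiff_id.smul contDiff_const)
  set g1 : ℝ → ℝ := deriv g with hg1
  set g2 : ℝ → ℝ := deriv g1 with hg2
  set g3 : ℝ → ℝ := deriv g2 with hg3
  set g4 : ℝ → ℝ := deriv g3 with hg4
  have hgC1 : ContDiff ℝ (3:ℕ) g1 := by
    have := ContDiff.iterate_deriv' 3 1 (f := g) (by exact_mod_cast hgC)
    simpa using this
  have hgC2 : ContDiff ℝ (2:ℕ) g2 := by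
    have := ContDiff.iterate_deriv' 2 1 (f := g1) (by exact_mod_cast hgC1)
    simpa using this
  have hgC3 : ContDiff ℝ (1:ℕ) g3 := by
    have := ContDiff.iterate_deriv' 1 1 (f := g2) (by exact_mod_cast hgC2)
    simpa using this
  have hd0 : ∀ r, HasDerivAt g (g1 r) r := fun r =>
    ((hgC.differentiable (by norm_num)) r).hasDerivAt
  have hd1 : ∀ r, HasDerivAt g1 (g2 r) r := fun r =>
    ((hgC1.differentiable (by norm_num)) r).hasDerivAt
  have hd2 : ∀ r, HasDerivAt g2 (g3 r) r := fun r =>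
    ((hgC2.differentiable (by norm_num)) r).hasDerivAt
  have hd3 : ∀ r, HasDerivAt g3 (g4 r) r := fun r =>
    ((hgC3.differentiable (by norm_num)) r).hasDerivAt
  have hc4 : Continuous g4 := hgC3.continuous_deriv (by norm_num)
  have hu1 : ∀ r > (0:ℝ), HasDerivAt g (g1 r) r := fun r _ => hd0 r
  have hu2 : ∀ r > (0:ℝ), HasDerivAt g1 (g2 r) r := fun r _ => hd1 r
  -- radial representation of v
  have hval : ∀ y : EuclideanSpace ℝ (Fin (m+2)), v y = g ‖y‖ := by
    intro y
    apply hrad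
    rw [norm_smul, hee, mul_one, Real.norm_eq_abs, abs_norm]
  have hval' : ∀ y : EuclideanSpace ℝ (Fin (m+2)), y ≠ 0 → v y = g ‖y‖ := fun y _ => hval y
  -- evenness of g and g1 0 = 0
  have hgeven : ∀ r : ℝ, g (-r) = g r := by
    intro r
    apply hrad
    simp [norm_smul]
  have h10 : g1 0 = 0 := by
    have a1 : HasDerivAt g (g1 0) 0 := hd0 0
    have a2 : HasDerivAt (fun r : ℝ => g (-r)) (g1 (-0) * (-1)) 0 := by
      exact HasDerivAt.comp 0 (hd0 (-0)) (by simpa using hasDerivAt_neg (0:ℝ))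
    rw [funext hgeven] at a2
    have := a1.unique a2
    rw [neg_zero] at this
    linarith
  -- Neumann condition gives g1 R = 0
  have hgrad : ∀ y : EuclideanSpace ℝ (Fin (m+2)), y ≠ 0 →
      (inner ℝ y (gradient v y) : ℝ) = ‖y‖ * g1 ‖y‖ := by
    intro y hy
    have h1 : (inner ℝ y (gradient v y) : ℝ) = (inner ℝ (gradient v y) y : ℝ) := real_inner_comm _ _
    rw [h1, gradient, InnerProductSpace.toDual_symm_apply,
      radial_fderiv_apply v g g1 hu1 hy hval' y, real_inner_self_eq_norm_sq]
    have hny : (0:ℝ) < ‖y‖ := norm_pos_iff.2 hy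
    field_simp
  have h1R : g1 R = 0 := by
    have h1 := hneumann x₀ hx₀
    have h2 := hgrad x₀ hx0ne
    rw [hx₀] at h2
    rw [real_inner_comm, h1] at h2
    have := h2.symm
    rcases mul_eq_zero.1 this with h | h
    · exact absurd h (ne_of_gt hR)
    · exact h
  -- the profile of Δv and its derivatives
  set hb : ℝ → ℝ := fun r => ptLap (m+2) v (r • e) with hhb
  have hbC : Continuous hb := by
    have h1 : ContDiff ℝ (2:ℕ) (ptLap (m+2) v) := ptLap_contDiff (by exact_mod_cast hv)
    exact h1.continuous.comp (continuous_id.smul continuous_const)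
  have hsmelt : ∀ r : ℝ, 0 < r → ‖r • e‖ = r := by
    intro r hr
    rw [norm_smul, hee, mul_one, Real.norm_eq_abs, abs_of_pos hr]
  have hsmne : ∀ r : ℝ, 0 < r → (r • e : EuclideanSpace ℝ (Fin (m+2))) ≠ 0 := by
    intro r hr h
    have := congrArg norm h
    rw [hsmelt r hr, norm_zero] at this
    exact absurd this (ne_of_gt hr)
  have hbe : ∀ r : ℝ, 0 < r → hb r = g2 r + ((m:ℝ)+1) * g1 r / r := by
    intro r hr
    simp only [hhb]
    have := radial_ptLap v g g1 g2 hu1 hu2 (hsmne r hr) hval'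
    rw [hsmelt r hr] at this
    rw [this]
    push_cast
    ring
  have hbrad : ∀ y : EuclideanSpace ℝ (Fin (m+2)), y ≠ 0 → ptLap (m+2) v y = hb ‖y‖ := by
    intro y hy
    have hny : (0:ℝ) < ‖y‖ := norm_pos_iff.2 hy
    rw [radial_ptLap v g g1 g2 hu1 hu2 hy hval', hbe ‖y‖ hny]
    push_cast
    ring
  -- derivatives of hb away from 0
  set h1f : ℝ → ℝ := fun r => g3 r + ((m:ℝ)+1)*(g2 r/r - g1 r/r^2) with hh1f
  set h2f : ℝ → ℝ := fun r => g4 r + ((m:ℝ)+1)*(g3 r/r - 2*g2 r/r^2 + 2*g1 r/r^3) with hh2f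
  have hbd1 : ∀ r > (0:ℝ), HasDerivAt hb (h1f r) r := by
    intro r hr
    have hform : HasDerivAt (fun t => g2 t + ((m:ℝ)+1) * g1 t / t) (h1f r) r := by
      have hA : HasDerivAt (fun t : ℝ => ((m:ℝ)+1) * g1 t / t)
          ((((m:ℝ)+1) * g2 r * r - ((m:ℝ)+1) * g1 r * 1) / r^2) r := by
        exact (((hd1 r).const_mul (((m:ℝ)+1))).div (hasDerivAt_id r) (ne_of_gt hr))
      have := (hd2 r).add hA
      refine this.congr_deriv ?_
      rw [hh1f]
      field_simp
    apply hform.congr_of_eventuallyEq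
    filter_upwards [Ioi_mem_nhds hr] with t ht
    exact hbe t ht
  have hbd2 : ∀ r > (0:ℝ), HasDerivAt h1f (h2f r) r := by
    intro r hr
    have hA : HasDerivAt (fun t : ℝ => g2 t / t) ((g3 r * r - g2 r * 1) / r^2) r :=
      (hd2 r).div (hasDerivAt_id r) (ne_of_gt hr)
    have hB : HasDerivAt (fun t : ℝ => g1 t / t^2) ((g2 r * r^2 - g1 r * (2*r^1)) / (r^2)^2) r := by
      have hp : HasDerivAt (fun t : ℝ => t^2) ((2:ℕ) * r^1) r := hasDerivAt_pow 2 r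
      exact (hd1 r).div hp (by positivity)
    have := (hd3 r).add (((hA.sub hB)).const_mul (((m:ℝ)+1)))
    refine this.congr_deriv ?_
    rw [hh2f]
    field_simp
    ring
  -- the profile of Δ²v
  set Hb : ℝ → ℝ := fun r => ptLap (m+2) (ptLap (m+2) v) (r • e) with hHb
  have HbC : Continuous Hb := by
    have h0 : ContDiff ℝ (2:ℕ) (ptLap (m+2) v) := ptLap_contDiff (by exact_mod_cast hv)
    have h1 : ContDiff ℝ (0:ℕ) (ptLap (m+2) (ptLap (m+2) v)) := ptLap_contDiff (by exact_mod_cast h0)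
    exact h1.continuous.comp (continuous_id.smul continuous_const)
  have Hrad : ∀ y : EuclideanSpace ℝ (Fin (m+2)), y ≠ 0 →
      ptLap (m+2) (ptLap (m+2) v) y = h2f ‖y‖ + ((m:ℝ)+1) * h1f ‖y‖ / ‖y‖ := by
    intro y hy
    have := radial_ptLap (ptLap (m+2) v) hb h1f h2f hbd1 hbd2 hy hbrad
    rw [this]
    push_cast
    ring
  have Hbe : ∀ r : ℝ, 0 < r → Hb r = (g4 r + ((m:ℝ)+1)*(g3 r/r - 2*g2 r/r^2 + 2*g1 r/r^3))
      + ((m:ℝ)+1)*(g3 r + ((m:ℝ)+1)*(g2 r/r - g1 r/r^2))/r := by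
    intro r hr
    simp only [hHb]
    have := Hrad (r • e) (hsmne r hr)
    rw [hsmelt r hr] at this
    rw [this, hh1f, hh2f]
  -- polar coordinate conversion of the two integrals
  have hpolar1 : ∫ x in ball (0 : EuclideanSpace ℝ (Fin (m+2))) R,
      ptLap (m+2) (fun y => ptLap (m+2) v y) x * (inner ℝ x (gradient v x) : ℝ)
      = sphereMeasure (m+2) * ∫ r in Ioc (0:ℝ) R, r^(m+1) * (Hb r * (r * g1 r)) := by
    have := polar (n := m+2) (by omega) R
      (fun x => ptLap (m+2) (fun y => ptLap (m+2) v y) x * (inner ℝ x (gradient v x) : ℝ))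
      (fun r => Hb r * (r * g1 r)) ?_
    · simpa using this
    · intro y hy
      beta_reduce
      have hny : (0:ℝ) < ‖y‖ := norm_pos_iff.2 hy
      have hH : ptLap (m+2) (fun y => ptLap (m+2) v y) y = Hb ‖y‖ := by
        have h1 := Hrad y hy
        have h2 := Hrad (‖y‖ • e) (hsmne ‖y‖ hny)
        rw [hsmelt ‖y‖ hny] at h2
        rw [show (fun y => ptLap (m+2) v y) = ptLap (m+2) v from rfl, h1]; simp only [hHb]; rw [h2]
      rw [hH, hgrad y hy]
  have hpolar2 : ∫ x in ball (0 : EuclideanSpace ℝ (Fin (m+2))) R,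
      (ptLap (m+2) v x)^2
      = sphereMeasure (m+2) * ∫ r in Ioc (0:ℝ) R, r^(m+1) * hb r^2 := by
    have := polar (n := m+2) (by omega) R
      (fun x => (ptLap (m+2) v x)^2) (fun r => hb r^2) ?_
    · simpa using this
    · intro y hy
      beta_reduce
      rw [hbrad y hy]
  -- the boundary term
  have hbnd : fderiv ℝ (fun y => fderiv ℝ v y (R⁻¹ • x₀)) x₀ (R⁻¹ • x₀) = g2 R := by
    rw [← he]
    rw [radial_fderiv2 v g g1 g2 hu1 hu2 hx0ne hval' e e, hx₀]
    have hxe : (inner ℝ x₀ e : ℝ) = R := by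
      rw [he, real_inner_smul_right, real_inner_self_eq_norm_sq, hx₀]
      field_simp
    have hej : (inner ℝ e e : ℝ) = 1 := by
      rw [real_inner_self_eq_norm_sq, hee]; norm_num
    rw [hxe, hej, h1R]
    field_simp
    ring
  -- the 1D identity
  have hone := oneD m R hR g1 g2 g3 g4 hd1 hd2 hd3 hc4 h10 h1R hb Hb hbC HbC hbe Hbe
  -- put everything together
  rw [hpolar1, hpolar2, hbnd]
  have hcast : (((m+2:ℕ) : ℝ) - 4) / 2 = ((m:ℝ) - 2)/2 := by push_cast; ring
  rw [hcast]
  have hRn : (R:ℝ)^((m+2:ℕ)) = R^(m+2) := rfl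
  linear_combination sphereMeasure (m+2) * hone
end
end
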